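/- arXiv:1503.05402 — 4 statements merged into one kernel-verified Lean document; each statement's English description precedes it below -/
import Mathlib

section
/- For integers p, q ≥ 1, the scattering polynomial φ^{(p,q)} satisfies the eigenvalue equation -(1 - z z̄) ∂²φ^{(p,q)}/∂z∂z̄ = pq · φ^{(p,q)} on ℂ; equivalently, -((1 - x² - y²)/4) Δ φ^{(p,q)} = pq φ^{(p,q)} where Δ is the Euclidean Laplacian. -/
open MeasureTheory Complex

/-- Wirtinger derivative ∂/∂z = (∂ₓ - i∂ᵧ)/2 -/
noncomputable def wdz (f : ℂ → ℂ) (z : ℂ) : ℂ :=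
  (fderiv ℝ f z 1 - Complex.I * fderiv ℝ f z Complex.I) / 2

/-- Wirtinger derivative ∂/∂z̄ = (∂ₓ + i∂ᵧ)/2 -/
noncomputable def wdzbar (f : ℂ → ℂ) (z : ℂ) : ℂ :=
  (fderiv ℝ f z 1 + Complex.I * fderiv ℝ f z Complex.I) / 2

/-- Scattering polynomial φ^{(p,q)} given by the Rodrigues-type formula
    φ^{(p,q)}(z) = ((-1)^p / (q (p+q-1)!)) (1 - z z̄) ∂^{p+q}/∂z^p ∂z̄^q (1 - z z̄)^{p+q-1}. -/
noncomputable def scatter (p q : ℕ) : ℂ → ℂ := fun z =>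
  ((-1 : ℂ) ^ p / (q * Nat.factorial (p + q - 1))) * (1 - z * (starRingEnd ℂ) z) *
    (wdz^[p] (wdzbar^[q] (fun w => (1 - w * (starRingEnd ℂ) w) ^ (p + q - 1))) z)

/-!
Treat `z` and `z̄` as independent variables: on functions `z ↦ P(z, z̄)` with `P` a polynomial
in two variables, the Wirtinger derivatives act as the formal partial derivatives of `P`. With
`U = 1 - z z̄`, `n = p + q - 1` and `G = ∂ᵖ ∂̄^q Uⁿ`, the eigenvalue equation for `φ = c U G`
reads `U ∂∂̄G - z ∂G - z̄ ∂̄G + (pq - 1) G = 0`. Now `Uⁿ` solves `U ∂̄Uⁿ + n z Uⁿ = 0`;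
differentiating this `q` times in `z̄` and `p + 1` times in `z` (Leibniz rule, `U` being of
degree one in each variable) gives one second-order relation for `G`, and the same computation
with `z` and `z̄` exchanged gives another. `q` times the first plus `p` times the second is
`p + q` times the eigenvalue equation.
-/

namespace MvPolynomial

variable {R σ : Type*} [CommRing R]

/-- `pderiv i` in the endomorphism ring, so that iterated partial derivatives are powers. -/
noncomputable abbrev pderivEnd (i : σ) : Module.End R (MvPolynomial σ R) := (pderiv i).toLinearMap

theorem pderivEnd_apply (i : σ) (P : MvPolynomial σ R) : pderivEnd i P = pderiv i P := rfl

theorem pderiv_pderiv_X (i j k : σ) : pderiv i (pderiv j (X k : MvPolynomial σ R)) = 0 := by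
  classical
  rw [pderiv_X]
  by_cases h : j = k
  · subst h; simp
  · simp [Ne.symm h]

theorem pderiv_pderiv_comm (i j : σ) (P : MvPolynomial σ R) :
    pderiv i (pderiv j P) = pderiv j (pderiv i P) := by
  induction P using MvPolynomial.induction_on with
  | C a => simp
  | add P Q hP hQ => simp [hP, hQ]
  | mul_X P k hP =>
    simp only [pderiv_mul, map_add, pderiv_pderiv_X, hP]
    ring

theorem commute_pderivEnd (i j : σ) : Commute (pderivEnd (R := R) i) (pderivEnd j) :=
  LinearMap.ext fun P => pderiv_pderiv_comm i j P

theorem pderivEnd_pow_succ_apply (i : σ) (k : ℕ) (P : MvPolynomial σ R) :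
    (pderivEnd i ^ (k + 1)) P = pderiv i ((pderivEnd i ^ k) P) := by
  rw [pow_succ', Module.End.mul_apply, pderivEnd_apply]

theorem pderivEnd_pow_apply_natCast_mul (i : σ) (k m : ℕ) (P : MvPolynomial σ R) :
    (pderivEnd i ^ k) ((m : MvPolynomial σ R) * P) = m * (pderivEnd i ^ k) P := by
  rw [← nsmul_eq_mul, map_nsmul, nsmul_eq_mul]

theorem pderivEnd_pow_apply_X_mul_of_ne {i j : σ} (h : j ≠ i) (k : ℕ) (P : MvPolynomial σ R) :
    (pderivEnd i ^ k) (X j * P) = X j * (pderivEnd i ^ k) P := by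
  induction k with
  | zero => rfl
  | succ k ih => simp [pderivEnd_pow_succ_apply, ih, pderiv_X_of_ne h]

theorem pderivEnd_pow_succ_apply_X_mul (i : σ) (k : ℕ) (P : MvPolynomial σ R) :
    (pderivEnd i ^ (k + 1)) (X i * P)
      = X i * (pderivEnd i ^ (k + 1)) P + (k + 1 : MvPolynomial σ R) * (pderivEnd i ^ k) P := by
  induction k with
  | zero => simp [add_comm]
  | succ k ih =>
    rw [pderivEnd_pow_succ_apply i (k + 1), ih, pderivEnd_pow_succ_apply i (k + 1),
      pderivEnd_pow_succ_apply i k]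
    simp only [map_add, pderiv_mul, pderiv_X_self, Derivation.map_natCast, pderiv_one]
    push_cast
    ring

theorem pderivEnd_pow_succ_apply_one_sub_X_mul_X_mul {i j : σ} (h : j ≠ i) (k : ℕ)
    (P : MvPolynomial σ R) :
    (pderivEnd i ^ (k + 1)) ((1 - X i * X j) * P)
      = (1 - X i * X j) * (pderivEnd i ^ (k + 1)) P
        - (k + 1 : MvPolynomial σ R) * X j * (pderivEnd i ^ k) P := by
  rw [sub_mul, one_mul, mul_comm (X i), mul_assoc, map_sub, pderivEnd_pow_apply_X_mul_of_ne h,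
    pderivEnd_pow_succ_apply_X_mul]
  ring

theorem pderiv_one_sub_X_mul_X_mul {i j : σ} (h : i ≠ j) (P : MvPolynomial σ R) :
    pderiv j ((1 - X i * X j) * P) = (1 - X i * X j) * pderiv j P - X i * P := by
  simp only [pderiv_mul, map_sub, pderiv_one, pderiv_X_self, pderiv_X_of_ne h]
  ring

theorem pderiv_pderiv_one_sub_X_mul_X_mul {i j : σ} (h : i ≠ j) (P : MvPolynomial σ R) :
    pderiv i (pderiv j ((1 - X i * X j) * P))
      = (1 - X i * X j) * pderiv i (pderiv j P) - X i * pderiv i P - X j * pderiv j P - P := by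
  rw [pderiv_one_sub_X_mul_X_mul h, map_sub, mul_comm (X i) (X j),
    pderiv_one_sub_X_mul_X_mul h.symm, pderiv_mul, pderiv_X_self]
  ring

theorem one_sub_X_mul_X_mul_pderiv_pow {i j : σ} (h : i ≠ j) (n : ℕ) :
    (1 - X i * X j) * pderiv j ((1 - X i * X j : MvPolynomial σ R) ^ n)
      + (n : MvPolynomial σ R) * X i * (1 - X i * X j) ^ n = 0 := by
  rcases n with _ | n
  · simp
  · simp only [Derivation.leibniz_pow, add_tsub_cancel_right, map_sub, pderiv_one, pderiv_mul,
      pderiv_X_self, pderiv_X_of_ne h, nsmul_eq_mul, smul_eq_mul]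
    ring

theorem one_sub_X_mul_X_mul_pderivEnd_pow_succ {i j : σ} (h : i ≠ j) (n q : ℕ) :
    (1 - X i * X j) * (pderivEnd j ^ (q + 1)) ((1 - X i * X j : MvPolynomial σ R) ^ n)
      + (n - q : MvPolynomial σ R) * X i * (pderivEnd j ^ q) ((1 - X i * X j) ^ n) = 0 := by
  induction q with
  | zero => simpa using one_sub_X_mul_X_mul_pderiv_pow h n
  | succ q ih =>
    have h' := congrArg (pderiv j) ih
    rw [map_add, map_zero, pderiv_one_sub_X_mul_X_mul h] at h'
    simp only [pderiv_mul, pderiv_X_of_ne h, map_sub, Derivation.map_natCast, sub_self, zero_mul,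
      mul_zero, add_zero, zero_add, ← pderivEnd_pow_succ_apply] at h'
    push_cast
    linear_combination h'

noncomputable def rodriguesPoly (i j : σ) (n a b : ℕ) : MvPolynomial σ R :=
  (pderivEnd i ^ a * pderivEnd j ^ b : Module.End R (MvPolynomial σ R)) ((1 - X i * X j) ^ n)

theorem pderiv_rodriguesPoly_left (i j : σ) (n a b : ℕ) :
    pderiv i (rodriguesPoly (R := R) i j n a b) = rodriguesPoly i j n (a + 1) b := by
  simp only [rodriguesPoly, pow_succ', mul_assoc, Module.End.mul_apply, pderivEnd_apply]

theorem pderiv_rodriguesPoly_right (i j : σ) (n a b : ℕ) :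
    pderiv j (rodriguesPoly (R := R) i j n a b) = rodriguesPoly i j n a (b + 1) := by
  rw [rodriguesPoly, rodriguesPoly, pow_succ', ← mul_assoc,
    ← ((commute_pderivEnd j i).pow_right a).eq, mul_assoc]
  rfl

theorem rodriguesPoly_swap (i j : σ) (n a b : ℕ) :
    rodriguesPoly (R := R) j i n b a = rodriguesPoly i j n a b := by
  rw [rodriguesPoly, rodriguesPoly, ((commute_pderivEnd j i).pow_pow b a).eq, mul_comm (X j)]

theorem rodriguesPoly_relation {i j : σ} (h : i ≠ j) (n p q : ℕ) :
    (1 - X i * X j) * rodriguesPoly i j n (p + 1) (q + 1)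
      - (p + 1 : MvPolynomial σ R) * X j * rodriguesPoly i j n p (q + 1)
      + (n - q : MvPolynomial σ R) * (X i * rodriguesPoly i j n (p + 1) q
        + (p + 1 : MvPolynomial σ R) * rodriguesPoly i j n p q) = 0 := by
  have h' := congrArg (pderivEnd i ^ (p + 1))
    (one_sub_X_mul_X_mul_pderivEnd_pow_succ (R := R) h n q)
  rw [map_add, map_zero, pderivEnd_pow_succ_apply_one_sub_X_mul_X_mul h.symm] at h'
  simp only [sub_mul, mul_assoc, map_sub, pderivEnd_pow_apply_natCast_mul,
    pderivEnd_pow_succ_apply_X_mul] at h'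
  simp only [rodriguesPoly, Module.End.mul_apply]
  linear_combination h'

theorem pderiv_pderiv_one_sub_X_mul_X_mul_rodriguesPoly [IsDomain R] [CharZero R] {i j : σ}
    (h : i ≠ j) {p q : ℕ} (hpq : p + q ≠ 0) :
    pderiv i (pderiv j ((1 - X i * X j) * rodriguesPoly i j (p + q - 1) p q))
      = -(p * q : MvPolynomial σ R) * rodriguesPoly i j (p + q - 1) p q := by
  have hn : ((p + q - 1 : ℕ) : MvPolynomial σ R) = p + q - 1 := by
    rw [Nat.cast_pred (Nat.pos_of_ne_zero hpq), Nat.cast_add]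
  have e₁ := rodriguesPoly_relation (R := R) h (p + q - 1) p q
  have e₂ := rodriguesPoly_relation (R := R) h.symm (p + q - 1) q p
  simp only [rodriguesPoly_swap, mul_comm (X j) (X i)] at e₂
  rw [hn] at e₁ e₂
  rw [pderiv_pderiv_one_sub_X_mul_X_mul h]
  simp only [pderiv_rodriguesPoly_left, pderiv_rodriguesPoly_right]
  refine mul_left_cancel₀ (a := ((p + q : ℕ) : MvPolynomial σ R)) (Nat.cast_ne_zero.mpr hpq) ?_
  push_cast
  linear_combination (q : MvPolynomial σ R) * e₁ + (p : MvPolynomial σ R) * e₂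

end MvPolynomial

open MvPolynomial ComplexConjugate

noncomputable def wirtingerCLM (a b : ℂ) : ℂ →L[ℝ] ℂ :=
  a • ContinuousLinearMap.id ℝ ℂ + b • (conjCLE : ℂ →L[ℝ] ℂ)

@[simp] theorem wirtingerCLM_apply (a b v : ℂ) : wirtingerCLM a b v = a * v + b * conj v := rfl

theorem wdz_of_hasFDerivAt {f : ℂ → ℂ} {a b z : ℂ} (hf : HasFDerivAt f (wirtingerCLM a b) z) :
    wdz f z = a := by
  rw [wdz, hf.fderiv]
  simp only [wirtingerCLM_apply, map_one, conj_I]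
  linear_combination (b - a) / 2 * I_mul_I

theorem wdzbar_of_hasFDerivAt {f : ℂ → ℂ} {a b z : ℂ} (hf : HasFDerivAt f (wirtingerCLM a b) z) :
    wdzbar f z = b := by
  rw [wdzbar, hf.fderiv]
  simp only [wirtingerCLM_apply, map_one, conj_I]
  linear_combination (a - b) / 2 * I_mul_I

noncomputable def evalConj (P : MvPolynomial (Fin 2) ℂ) (z : ℂ) : ℂ := aeval ![z, conj z] P

@[simp] theorem evalConj_apply (P : MvPolynomial (Fin 2) ℂ) (z : ℂ) :
    evalConj P z = aeval ![z, conj z] P := rfl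

theorem evalConj_add (P Q : MvPolynomial (Fin 2) ℂ) :
    evalConj (P + Q) = evalConj P + evalConj Q := funext fun _ => map_add _ P Q

theorem evalConj_mul (P Q : MvPolynomial (Fin 2) ℂ) :
    evalConj (P * Q) = evalConj P * evalConj Q := funext fun _ => map_mul _ P Q

theorem hasFDerivAt_evalConj_X (k : Fin 2) (z : ℂ) :
    HasFDerivAt (evalConj (X k))
      (wirtingerCLM (evalConj (pderiv 0 (X k)) z) (evalConj (pderiv 1 (X k)) z)) z := by
  match k with
  | 0 =>
    have h : evalConj (X 0) = id := funext fun _ => by simp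
    rw [h]
    exact (hasFDerivAt_id z).congr_fderiv (ContinuousLinearMap.ext fun v => by simp [pderiv_X])
  | 1 =>
    have h : evalConj (X 1) = conjCLE := funext fun _ => by simp
    rw [h]
    exact (conjCLE : ℂ →L[ℝ] ℂ).hasFDerivAt.congr_fderiv
      (ContinuousLinearMap.ext fun v => by simp [pderiv_X])

theorem hasFDerivAt_evalConj (P : MvPolynomial (Fin 2) ℂ) (z : ℂ) :
    HasFDerivAt (evalConj P)
      (wirtingerCLM (evalConj (pderiv 0 P) z) (evalConj (pderiv 1 P) z)) z := by
  induction P using MvPolynomial.induction_on with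
  | C a =>
    have h : evalConj (C a) = fun _ => a := funext fun _ => by simp
    rw [h]
    exact (hasFDerivAt_const a z).congr_fderiv (ContinuousLinearMap.ext fun v => by simp)
  | add P Q hP hQ =>
    rw [evalConj_add]
    exact (hP.add hQ).congr_fderiv (ContinuousLinearMap.ext fun v => by
      simp only [add_apply, wirtingerCLM_apply, map_add, evalConj_apply]
      ring)
  | mul_X P k hP =>
    rw [evalConj_mul]
    exact (hP.mul (hasFDerivAt_evalConj_X k z)).congr_fderiv
      (ContinuousLinearMap.ext fun v => by
        simp only [add_apply, smul_apply, smul_eq_mul,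
          wirtingerCLM_apply, pderiv_mul, map_add, map_mul, evalConj_apply]
        ring)

theorem wdz_evalConj (P : MvPolynomial (Fin 2) ℂ) : wdz (evalConj P) = evalConj (pderiv 0 P) :=
  funext fun z => wdz_of_hasFDerivAt (hasFDerivAt_evalConj P z)

theorem wdzbar_evalConj (P : MvPolynomial (Fin 2) ℂ) :
    wdzbar (evalConj P) = evalConj (pderiv 1 P) :=
  funext fun z => wdzbar_of_hasFDerivAt (hasFDerivAt_evalConj P z)

theorem wdz_iterate_evalConj (k : ℕ) (P : MvPolynomial (Fin 2) ℂ) :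
    wdz^[k] (evalConj P) = evalConj ((pderivEnd 0 ^ k) P) := by
  rw [Module.End.coe_pow]
  exact ((Function.Semiconj.iterate_right (fun P => (wdz_evalConj P).symm) k) P).symm

theorem wdzbar_iterate_evalConj (k : ℕ) (P : MvPolynomial (Fin 2) ℂ) :
    wdzbar^[k] (evalConj P) = evalConj ((pderivEnd 1 ^ k) P) := by
  rw [Module.End.coe_pow]
  exact ((Function.Semiconj.iterate_right (fun P => (wdzbar_evalConj P).symm) k) P).symm

theorem scatter_eq_evalConj (p q : ℕ) :
    scatter p q = evalConj (C ((-1 : ℂ) ^ p / (q * (p + q - 1).factorial))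
      * ((1 - X 0 * X 1) * rodriguesPoly 0 1 (p + q - 1) p q)) := by
  have hU : (fun w => (1 - w * conj w) ^ (p + q - 1)) = evalConj ((1 - X 0 * X 1) ^ (p + q - 1)) :=
    funext fun w => by simp
  ext z
  rw [scatter, hU, wdzbar_iterate_evalConj, wdz_iterate_evalConj, rodriguesPoly,
    Module.End.mul_apply]
  simp only [evalConj_apply, map_mul, map_sub, map_one, aeval_C, aeval_X, Algebra.algebraMap_self,
    RingHom.id_apply, Matrix.cons_val_zero, Matrix.cons_val_one, Matrix.cons_val_fin_one]
  ring

theorem scatter_eigenfunction_general (p q : ℕ) (hq : 1 ≤ q) (z : ℂ) :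
    -((1 - z * (starRingEnd ℂ) z) * wdz (wdzbar (scatter p q)) z)
      = (p * q : ℂ) * scatter p q z := by
  rw [scatter_eq_evalConj, wdzbar_evalConj, wdz_evalConj, pderiv_C_mul, pderiv_C_mul,
    pderiv_pderiv_one_sub_X_mul_X_mul_rodriguesPoly (by decide) (by omega)]
  simp only [evalConj_apply, map_mul, map_neg, map_sub, map_one, map_natCast, aeval_C, aeval_X,
    Algebra.algebraMap_self, RingHom.id_apply, Matrix.cons_val_zero, Matrix.cons_val_one,
    Matrix.cons_val_fin_one]
  ring

/-- Scattering polynomials are eigenfunctions of -Δ̃ = -(1 - z z̄)∂²/∂z∂z̄ with eigenvalue pq. -/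
theorem scatter_eigenfunction (p q : ℕ) (hp : 1 ≤ p) (hq : 1 ≤ q) (z : ℂ) :
    -((1 - z * (starRingEnd ℂ) z) * wdz (wdzbar (scatter p q)) z)
      = (p * q : ℂ) * scatter p q z :=
  scatter_eigenfunction_general p q hq z
end

section
/- For integers p, q ≥ 1, with m = |p - q| and ν = min{p,q} - 1, the scattering polynomial satisfies φ^{(p,q)}(z) = ((-1)^{q+ν+1}/q) (1 - z z̄) z^{m+ν-p+1} z̄^{m+ν-q+1} Σ_{j=0}^{ν} (-1)^j ((j+ν+m+1)! / (j! (j+m)! (ν-j)!)) (z z̄)^j. -/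
open MeasureTheory Complex

/-!
Expand `(1 - z z̄)ⁿ = ∑ᵢ (-1)ⁱ C(n, i) zⁱ z̄ⁱ` with `n = p + q - 1`. On a monomial `zᵃ z̄ᵇ` the
Wirtinger derivatives act like partial derivatives in independent variables `z` and `z̄`, so
`∂ᵖ ∂̄^q` turns the `i`-th term into `(-1)ⁱ C(n, i) (i)_p (i)_q z^(i-p) z̄^(i-q)` with falling
factorials `(i)_p`, `(i)_q`. These vanish for `i < max p q`; writing `i = max p q + j`, the
coefficient `C(n, i) (i)_p (i)_q / n! = i! / ((i-p)! (i-q)! (n-i)!)` is the one in the expansion.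
-/

open scoped Nat

section Wirtinger

variable {f : ℂ → ℂ} {z α β : ℂ}

theorem wdz_eq_of_hasFDerivAt
    (h : HasFDerivAt f (α • ContinuousLinearMap.id ℝ ℂ + β • (conjCLE : ℂ →L[ℝ] ℂ)) z) :
    wdz f z = α := by
  simp only [wdz, h.fderiv, add_apply, smul_apply, ContinuousLinearMap.id_apply,
    ContinuousLinearEquiv.coe_coe, conjCLE_apply, smul_eq_mul, map_one, conj_I]
  linear_combination (β - α) / 2 * I_sq

theorem wdzbar_eq_of_hasFDerivAt
    (h : HasFDerivAt f (α • ContinuousLinearMap.id ℝ ℂ + β • (conjCLE : ℂ →L[ℝ] ℂ)) z) :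
    wdzbar f z = β := by
  simp only [wdzbar, h.fderiv, add_apply, smul_apply, ContinuousLinearMap.id_apply,
    ContinuousLinearEquiv.coe_coe, conjCLE_apply, smul_eq_mul, map_one, conj_I]
  linear_combination (α - β) / 2 * I_sq

end Wirtinger

noncomputable def zzbarMonomial (c : ℂ) (a b : ℕ) (z : ℂ) : ℂ :=
  c * z ^ a * (starRingEnd ℂ) z ^ b

theorem hasFDerivAt_zzbarMonomial (c : ℂ) (a b : ℕ) (z : ℂ) :
    HasFDerivAt (zzbarMonomial c a b)
      (zzbarMonomial (c * a) (a - 1) b z • ContinuousLinearMap.id ℝ ℂ +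
        zzbarMonomial (c * b) a (b - 1) z • (conjCLE : ℂ →L[ℝ] ℂ)) z := by
  have hz : HasFDerivAt (fun w : ℂ => w ^ a)
      (((a : ℂ) * z ^ (a - 1)) • ContinuousLinearMap.id ℝ ℂ) z :=
    ((hasDerivAt_pow a z).hasFDerivAt.restrictScalars ℝ).congr_fderiv (by ext w; simp [mul_comm])
  have hzbar : HasFDerivAt (fun w : ℂ => (starRingEnd ℂ) w ^ b)
      (((b : ℂ) * (starRingEnd ℂ) z ^ (b - 1)) • (conjCLE : ℂ →L[ℝ] ℂ)) z :=
    (((hasDerivAt_pow b ((starRingEnd ℂ) z)).hasFDerivAt.restrictScalars ℝ).comp z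
      conjCLE.hasFDerivAt).congr_fderiv (by ext w; simp [mul_comm])
  refine ((hz.const_mul c).mul hzbar).congr_fderiv ?_
  ext w
  simp [zzbarMonomial]
  ring

section Sums

variable {ι : Type*} (s : Finset ι) (c : ι → ℂ) (a b : ι → ℕ)

theorem hasFDerivAt_sum_zzbarMonomial (z : ℂ) :
    HasFDerivAt (∑ i ∈ s, zzbarMonomial (c i) (a i) (b i))
      ((∑ i ∈ s, zzbarMonomial (c i * a i) (a i - 1) (b i)) z • ContinuousLinearMap.id ℝ ℂ +
        (∑ i ∈ s, zzbarMonomial (c i * b i) (a i) (b i - 1)) z • (conjCLE : ℂ →L[ℝ] ℂ)) z := by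
  simpa only [Finset.sum_apply, ← Finset.sum_smul, Finset.sum_add_distrib] using
    HasFDerivAt.sum (u := s) fun i _ => hasFDerivAt_zzbarMonomial (c i) (a i) (b i) z

theorem wdz_iterate_sum_zzbarMonomial (p : ℕ) :
    wdz^[p] (∑ i ∈ s, zzbarMonomial (c i) (a i) (b i)) =
      ∑ i ∈ s, zzbarMonomial (c i * (a i).descFactorial p) (a i - p) (b i) := by
  induction p with
  | zero => simp
  | succ p ih =>
    funext z
    rw [Function.iterate_succ_apply', ih,
      wdz_eq_of_hasFDerivAt (hasFDerivAt_sum_zzbarMonomial s _ _ b z)]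
    simp only [Finset.sum_apply, zzbarMonomial, Nat.descFactorial_succ, Nat.sub_sub]
    push_cast
    refine Finset.sum_congr rfl fun i _ => by ring

theorem wdzbar_iterate_sum_zzbarMonomial (q : ℕ) :
    wdzbar^[q] (∑ i ∈ s, zzbarMonomial (c i) (a i) (b i)) =
      ∑ i ∈ s, zzbarMonomial (c i * (b i).descFactorial q) (a i) (b i - q) := by
  induction q with
  | zero => simp
  | succ q ih =>
    funext z
    rw [Function.iterate_succ_apply', ih,
      wdzbar_eq_of_hasFDerivAt (hasFDerivAt_sum_zzbarMonomial s _ a _ z)]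
    simp only [Finset.sum_apply, zzbarMonomial, Nat.descFactorial_succ, Nat.sub_sub]
    push_cast
    refine Finset.sum_congr rfl fun i _ => by ring

end Sums

theorem one_sub_mul_conj_pow_eq_sum (n : ℕ) :
    (fun w : ℂ => (1 - w * (starRingEnd ℂ) w) ^ n) =
      ∑ i ∈ Finset.range (n + 1), zzbarMonomial ((-1) ^ i * n.choose i) i i := by
  funext z
  rw [sub_eq_neg_add, add_pow, Finset.sum_apply]
  refine Finset.sum_congr rfl fun i _ => ?_
  simp only [zzbarMonomial]
  ring

theorem Nat.choose_mul_descFactorial_mul_descFactorial_div_factorial {K : Type*} [Field K]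
    [CharZero K] {a b k n : ℕ} (ha : a ≤ k) (hb : b ≤ k) (hk : k ≤ n) :
    (n.choose k * k.descFactorial a * k.descFactorial b : K) / n ! =
      k ! / ((k - a)! * (k - b)! * (n - k)!) := by
  have hfac (m : ℕ) : (m ! : K) ≠ 0 := by exact_mod_cast m.factorial_ne_zero
  have hdesc {c : ℕ} (hc : c ≤ k) : (k.descFactorial c : K) = k ! / (k - c)! := by
    rw [eq_div_iff (hfac _), mul_comm]
    exact_mod_cast Nat.factorial_mul_descFactorial hc
  rw [Nat.cast_choose K hk, hdesc ha, hdesc hb]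
  field_simp
  simp only [mul_assoc]
  exact mul_div_mul_left _ _ (hfac n)

theorem Nat.factorial_sub_mul_factorial_sub_eq_max_min (k a b : ℕ) :
    (k - a)! * (k - b)! = (k - max a b)! * (k - min a b)! := by
  rcases le_total a b with h | h <;> simp [h, mul_comm]

theorem wdz_iterate_wdzbar_iterate_one_sub_mul_conj_pow (p q : ℕ) (hpq : 0 < p + q) :
    wdz^[p] (wdzbar^[q] (fun w : ℂ => (1 - w * (starRingEnd ℂ) w) ^ (p + q - 1))) =
      ∑ j ∈ Finset.range (min p q), zzbarMonomial
        ((-1) ^ (max p q + j) * (p + q - 1).choose (max p q + j) *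
          (max p q + j).descFactorial q * (max p q + j).descFactorial p)
        (max p q + j - p) (max p q + j - q) := by
  rw [one_sub_mul_conj_pow_eq_sum, wdzbar_iterate_sum_zzbarMonomial,
    wdz_iterate_sum_zzbarMonomial, show p + q - 1 + 1 = max p q + min p q by omega,
    Finset.sum_range_add, Finset.sum_eq_zero, zero_add]
  intro i hi
  have hdesc : (i.descFactorial q : ℂ) * i.descFactorial p = 0 := by
    rcases le_total p q with h | h <;>
      simp [Nat.descFactorial_eq_zero_iff_lt.mpr (by simpa [h] using Finset.mem_range.mp hi)]
  funext z
  simp [zzbarMonomial, mul_assoc, hdesc]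

theorem scatter_coefficient (p q j : ℕ) (hj : j < min p q) :
    (-1 : ℂ) ^ p / (q * (p + q - 1)!) * ((-1) ^ (max p q + j) *
        (p + q - 1).choose (max p q + j) * (max p q + j).descFactorial q *
        (max p q + j).descFactorial p) =
      (-1) ^ (q + (min p q - 1) + 1) / q * ((-1) ^ j *
        ((j + (min p q - 1) + (max p q - min p q) + 1)! /
          (j ! * (j + (max p q - min p q))! * (min p q - 1 - j)!))) := by
  have hcoef := Nat.choose_mul_descFactorial_mul_descFactorial_div_factorial (K := ℂ)
    (a := q) (b := p) (k := max p q + j) (n := p + q - 1) (by omega) (by omega) (by omega)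
  have hfac : (max p q + j - q)! * (max p q + j - p)! = j ! * (j + (max p q - min p q))! := by
    rw [Nat.factorial_sub_mul_factorial_sub_eq_max_min, max_comm, min_comm]
    congr 2 <;> omega
  rw [← Nat.cast_mul ((max p q + j - q)!), hfac, Nat.cast_mul,
    show p + q - 1 - (max p q + j) = min p q - 1 - j by omega] at hcoef
  have hsign : (-1 : ℂ) ^ (p + max p q) = (-1) ^ (q + (min p q - 1) + 1) := by
    rw [neg_one_pow_eq_pow_mod_two, neg_one_pow_eq_pow_mod_two (q + _ + 1)]
    congr 1
    omega
  rw [show j + (min p q - 1) + (max p q - min p q) + 1 = max p q + j by omega, ← hcoef, ← hsign]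
  ring

/-- Explicit expansion of the scattering polynomial, with m = |p-q| and ν = min{p,q} - 1. -/
theorem scatter_expansion (p q : ℕ) (hp : 1 ≤ p) (hq : 1 ≤ q) (z : ℂ) :
    scatter p q z =
      (((-1 : ℂ) ^ (q + (min p q - 1) + 1)) / q) * (1 - z * (starRingEnd ℂ) z) *
        z ^ ((max p q - min p q) + (min p q - 1) + 1 - p) *
        ((starRingEnd ℂ) z) ^ ((max p q - min p q) + (min p q - 1) + 1 - q) *
        ∑ j ∈ Finset.range ((min p q - 1) + 1),
          (-1 : ℂ) ^ j *
            ((Nat.factorial (j + (min p q - 1) + (max p q - min p q) + 1) : ℂ) /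
              ((Nat.factorial j : ℂ) * (Nat.factorial (j + (max p q - min p q)) : ℂ) *
                (Nat.factorial ((min p q - 1) - j) : ℂ))) *
            (z * (starRingEnd ℂ) z) ^ j := by
  rw [scatter, wdz_iterate_wdzbar_iterate_one_sub_mul_conj_pow p q (by omega), Finset.sum_apply,
    show min p q - 1 + 1 = min p q by omega, Finset.mul_sum, Finset.mul_sum]
  refine Finset.sum_congr rfl fun j hj => ?_
  have hcoef := scatter_coefficient p q j (Finset.mem_range.mp hj)
  rw [show max p q + j - p = (max p q - min p q) + (min p q - 1) + 1 - p + j by omega,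
    show max p q + j - q = (max p q - min p q) + (min p q - 1) + 1 - q + j by omega]
  simp only [zzbarMonomial]
  linear_combination (1 - z * (starRingEnd ℂ) z) *
    z ^ (max p q - min p q + (min p q - 1) + 1 - p) *
    (starRingEnd ℂ) z ^ (max p q - min p q + (min p q - 1) + 1 - q) *
    (z * (starRingEnd ℂ) z) ^ j * hcoef
end

section
/- For integers p, q ≥ 1 and z = r e^{iθ} with r ≥ 0, θ ∈ ℝ, one has φ^{(p,q)}(r e^{iθ}) = e^{i(q-p)θ} f^{(p,q)}(r), where f^{(p,q)}(r) = ((-1)^{q+ν+1}/q)(1 - r²) r^m Σ_{j=0}^{ν} (-1)^j ((j+ν+m+1)!/(j!(j+m)!(ν-j)!)) r^{2j}, with m = |p-q| and ν = min{p,q} - 1. -/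
/-!
Expanding `(1 - z z̄)^n` binomially, `∂^p ∂̄^q` acts monomial by monomial,
`z^k z̄^k ↦ k^(p) k^(q) z^(k-p) z̄^(k-q)` with falling factorials, so only the terms with
`k ≥ max p q` survive. At `z = r e^{iθ}` each of them equals `r^(2k-p-q) e^{i(q-p)θ}`, so the
phase factors out of `φ^{(p,q)}`. Writing `k = max p q + j`, the coefficient
`C(n,k) k^(p) k^(q) / n! = k! / ((k-p)! (k-q)! (n-k)!)` turns the remaining radial sum into
`f^{(p,q)}`.
-/

open MeasureTheory Complex

/-- The radial function f^{(p,q)}, with m = |p-q| and ν = min{p,q} - 1. -/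
noncomputable def radialF (p q : ℕ) (r : ℝ) : ℝ :=
  (((-1 : ℝ) ^ (q + (min p q - 1) + 1)) / q) * (1 - r ^ 2) * r ^ (max p q - min p q) *
    ∑ j ∈ Finset.range ((min p q - 1) + 1),
      (-1 : ℝ) ^ j *
        ((Nat.factorial (j + (min p q - 1) + (max p q - min p q) + 1) : ℝ) /
          ((Nat.factorial j : ℝ) * (Nat.factorial (j + (max p q - min p q)) : ℝ) *
            (Nat.factorial ((min p q - 1) - j) : ℝ))) * r ^ (2 * j)

open scoped ComplexConjugate

section Wirtinger

lemma hasFDerivAt_pow_mul_conj_pow (a b : ℕ) (z : ℂ) :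
    HasFDerivAt (fun w : ℂ => w ^ a * conj w ^ b)
      (((a : ℂ) * z ^ (a - 1) * conj z ^ b) • ContinuousLinearMap.id ℝ ℂ
        + ((b : ℂ) * z ^ a * conj z ^ (b - 1)) • conjCLE.toContinuousLinearMap) z := by
  have hpow (c : ℕ) := ((hasDerivAt_pow c z).hasFDerivAt).restrictScalars ℝ
  have hconj := conjCLE.toContinuousLinearMap.hasFDerivAt.comp z (hpow b)
  refine ((hpow a).mul (hconj.congr_of_eventuallyEq ?_)).congr_fderiv ?_
  · exact .of_forall fun w => by simp
  · ext v
    simp only [add_apply, smul_apply, ContinuousLinearMap.comp_apply,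
      ContinuousLinearMap.coe_restrictScalars', ContinuousLinearMap.toSpanSingleton_apply,
      smul_eq_mul, ContinuousLinearEquiv.coe_coe, ContinuousAlgEquiv.coeCLE_apply, conjCAE_apply,
      map_mul, map_natCast, map_pow, ContinuousLinearMap.id_apply]
    ring

lemma wdz_pow_mul_conj_pow (a b : ℕ) (z : ℂ) :
    wdz (fun w => w ^ a * conj w ^ b) z = a * z ^ (a - 1) * conj z ^ b := by
  rw [wdz, (hasFDerivAt_pow_mul_conj_pow a b z).fderiv]
  simp only [add_apply, smul_apply, ContinuousLinearMap.id_apply, smul_eq_mul, mul_one,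
    ContinuousLinearEquiv.coe_coe, ContinuousAlgEquiv.coeCLE_apply, conjCAE_apply, map_one, conj_I,
    mul_neg]
  linear_combination (b * z ^ a * conj z ^ (b - 1) - a * z ^ (a - 1) * conj z ^ b) / 2 * I_sq

lemma wdzbar_pow_mul_conj_pow (a b : ℕ) (z : ℂ) :
    wdzbar (fun w => w ^ a * conj w ^ b) z = b * z ^ a * conj z ^ (b - 1) := by
  rw [wdzbar, (hasFDerivAt_pow_mul_conj_pow a b z).fderiv]
  simp only [add_apply, smul_apply, ContinuousLinearMap.id_apply, smul_eq_mul, mul_one,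
    ContinuousLinearEquiv.coe_coe, ContinuousAlgEquiv.coeCLE_apply, conjCAE_apply, map_one, conj_I,
    mul_neg]
  linear_combination (a * z ^ (a - 1) * conj z ^ b - b * z ^ a * conj z ^ (b - 1)) / 2 * I_sq

variable {ι : Type*} (s : Finset ι) (c : ι → ℂ) {f : ι → ℂ → ℂ} {z : ℂ}

lemma wdz_sum_mul (h : ∀ i ∈ s, DifferentiableAt ℝ (f i) z) :
    wdz (fun w => ∑ i ∈ s, c i * f i w) z = ∑ i ∈ s, c i * wdz (f i) z := by
  have hc : ∀ i ∈ s, DifferentiableAt ℝ (fun w => c i * f i w) z :=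
    fun i hi => (h i hi).const_mul _
  simp only [wdz, fderiv_fun_sum hc, sum_apply, Finset.mul_sum,
    ← Finset.sum_sub_distrib, Finset.sum_div]
  refine Finset.sum_congr rfl fun i hi => ?_
  rw [fderiv_const_mul (h i hi)]
  simp only [smul_apply, smul_eq_mul]
  ring

lemma wdzbar_sum_mul (h : ∀ i ∈ s, DifferentiableAt ℝ (f i) z) :
    wdzbar (fun w => ∑ i ∈ s, c i * f i w) z = ∑ i ∈ s, c i * wdzbar (f i) z := by
  have hc : ∀ i ∈ s, DifferentiableAt ℝ (fun w => c i * f i w) z :=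
    fun i hi => (h i hi).const_mul _
  simp only [wdzbar, fderiv_fun_sum hc, sum_apply, Finset.mul_sum,
    ← Finset.sum_add_distrib, Finset.sum_div]
  refine Finset.sum_congr rfl fun i hi => ?_
  rw [fderiv_const_mul (h i hi)]
  simp only [smul_apply, smul_eq_mul]
  ring

end Wirtinger

/-- `∂^p ∂̄^q (1 - z z̄)^n`, obtained by expanding `(1 - z z̄)^n` binomially. -/
noncomputable def rodrigues (n p q : ℕ) : ℂ → ℂ := fun w =>
  ∑ k ∈ Finset.range (n + 1),
    (n.choose k * (-1) ^ k * k.descFactorial p * k.descFactorial q : ℂ) *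
      (w ^ (k - p) * conj w ^ (k - q))

lemma rodrigues_zero_zero (n : ℕ) : rodrigues n 0 0 = fun w => (1 - w * conj w) ^ n := by
  funext w
  rw [sub_eq_neg_add, add_pow, rodrigues]
  refine Finset.sum_congr rfl fun k _ => ?_
  simp only [Nat.descFactorial_zero, Nat.sub_zero, Nat.cast_one, mul_one, one_pow]
  rw [neg_pow (w * conj w), mul_pow]
  ring

lemma wdzbar_rodrigues (n p q : ℕ) : wdzbar (rodrigues n p q) = rodrigues n p (q + 1) := by
  funext z
  unfold rodrigues
  rw [wdzbar_sum_mul _ _ fun k _ => by fun_prop]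
  refine Finset.sum_congr rfl fun k _ => ?_
  rw [wdzbar_pow_mul_conj_pow, Nat.descFactorial_succ, Nat.sub_sub]
  push_cast
  ring

lemma wdz_rodrigues (n p q : ℕ) : wdz (rodrigues n p q) = rodrigues n (p + 1) q := by
  funext z
  unfold rodrigues
  rw [wdz_sum_mul _ _ fun k _ => by fun_prop]
  refine Finset.sum_congr rfl fun k _ => ?_
  rw [wdz_pow_mul_conj_pow, Nat.descFactorial_succ, Nat.sub_sub]
  push_cast
  ring

lemma iterate_wdz_wdzbar_one_sub_mul_conj_pow (n p q : ℕ) :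
    wdz^[p] (wdzbar^[q] fun w => (1 - w * conj w) ^ n) = rodrigues n p q := by
  have hz : Function.Semiconj (rodrigues n · q) Nat.succ wdz :=
    fun p => (wdz_rodrigues n p q).symm
  have hzbar : Function.Semiconj (rodrigues n 0) Nat.succ wdzbar :=
    fun q => (wdzbar_rodrigues n 0 q).symm
  rw [← rodrigues_zero_zero, ← hzbar.iterate_right, Nat.succ_iterate, zero_add,
    ← hz.iterate_right, Nat.succ_iterate, zero_add]

lemma ofReal_mul_exp_pow_mul_conj_pow (r θ : ℝ) (a b : ℕ) :
    (r * exp (θ * I)) ^ a * conj (r * exp (θ * I)) ^ b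
      = r ^ (a + b) * exp ((a - b : ℂ) * θ * I) := by
  have hconj : conj (r * exp (θ * I)) = r * exp (-(θ * I)) := by
    rw [map_mul, conj_ofReal, ← exp_conj, map_mul, conj_ofReal, conj_I, mul_neg]
  rw [hconj, mul_pow, mul_pow, ← exp_nat_mul, ← exp_nat_mul, pow_add]
  calc _ = (r : ℂ) ^ a * r ^ b * (exp (a * (θ * I)) * exp (b * -(θ * I))) := by ring
    _ = _ := by rw [← exp_add]; ring_nf

lemma rodrigues_ofReal_mul_exp (n p q : ℕ) (r θ : ℝ) :
    rodrigues n p q (r * exp (θ * I)) = exp ((q - p : ℂ) * θ * I) * rodrigues n p q r := by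
  unfold rodrigues
  rw [Finset.mul_sum]
  refine Finset.sum_congr rfl fun k _ => ?_
  by_cases hk : p ≤ k ∧ q ≤ k
  · have hreal := ofReal_mul_exp_pow_mul_conj_pow r 0 (k - p) (k - q)
    simp only [ofReal_zero, zero_mul, mul_zero, exp_zero, mul_one] at hreal
    rw [ofReal_mul_exp_pow_mul_conj_pow, hreal, Nat.cast_sub hk.1, Nat.cast_sub hk.2]
    ring_nf
  · rcases not_and_or.1 hk with h | h <;>
      simp [Nat.descFactorial_eq_zero_iff_lt.2 (not_le.1 h)]

lemma scatter_eq (p q : ℕ) (z : ℂ) :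
    scatter p q z = (-1) ^ p / (q * (p + q - 1).factorial) * (1 - z * conj z)
      * rodrigues (p + q - 1) p q z := by
  rw [scatter, iterate_wdz_wdzbar_one_sub_mul_conj_pow]

lemma scatter_ofReal_mul_exp (p q : ℕ) (r θ : ℝ) :
    scatter p q (r * exp (θ * I)) = exp ((q - p : ℂ) * θ * I) * scatter p q r := by
  have hnorm : (r * exp (θ * I)) * conj (r * exp (θ * I)) = r * conj (r : ℂ) := by
    rw [mul_conj', mul_conj', norm_mul, norm_exp_ofReal_mul_I, mul_one]
  rw [scatter_eq, scatter_eq, hnorm, rodrigues_ofReal_mul_exp]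
  ring

lemma rodrigues_eq_sum_shift (n p q : ℕ) (w : ℂ) :
    rodrigues n p q w = ∑ j ∈ Finset.range (n + 1 - max p q),
      (n.choose (max p q + j) * (-1) ^ (max p q + j) * (max p q + j).descFactorial p
        * (max p q + j).descFactorial q : ℂ)
        * (w ^ (max p q + j - p) * conj w ^ (max p q + j - q)) := by
  have hsub : Finset.Ico (max p q) (n + 1) ⊆ Finset.range (n + 1) := by
    rw [Finset.range_eq_Ico]; exact Finset.Ico_subset_Ico_left (Nat.zero_le _)
  rw [rodrigues, ← Finset.sum_subset hsub fun k hk hk' => ?_, Finset.sum_Ico_eq_sum_range]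
  have hkM : k < max p q := by simp only [Finset.mem_range, Finset.mem_Ico] at hk hk'; omega
  obtain h | h := lt_max_iff.1 hkM <;> simp [Nat.descFactorial_eq_zero_iff_lt.2 h]

lemma choose_mul_descFactorial_mul_descFactorial {n k p q : ℕ} (hp : p ≤ k) (hq : q ≤ k)
    (hk : k ≤ n) :
    n.choose k * k.descFactorial p * k.descFactorial q
        * ((k - p).factorial * (k - q).factorial * (n - k).factorial)
      = n.factorial * k.factorial := by
  calc _ = n.choose k * ((k - p).factorial * k.descFactorial p) * (n - k).factorial
        * ((k - q).factorial * k.descFactorial q) := by ring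
    _ = n.choose k * k.factorial * (n - k).factorial * k.factorial := by
      rw [Nat.factorial_mul_descFactorial hp, Nat.factorial_mul_descFactorial hq]
    _ = _ := by rw [Nat.choose_mul_factorial_mul_factorial hk]

lemma scatter_ofReal {p q : ℕ} (hp : 1 ≤ p) (hq : 1 ≤ q) (r : ℝ) :
    scatter p q r = radialF p q r := by
  rw [scatter_eq, rodrigues_eq_sum_shift, radialF]
  push_cast
  set M := max p q
  set ν := min p q - 1
  set m := M - min p q
  rw [show p + q - 1 + 1 - M = ν + 1 by omega, conj_ofReal, Finset.mul_sum, Finset.mul_sum]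
  refine Finset.sum_congr rfl fun j hj => ?_
  have hjν : j ≤ ν := Nat.lt_succ_iff.1 (Finset.mem_range.1 hj)
  have hk : j + ν + m + 1 = M + j := by omega
  have hpow : (r : ℂ) ^ (M + j - p) * (r : ℂ) ^ (M + j - q) = r ^ m * r ^ (2 * j) := by
    rw [← pow_add, ← pow_add]; congr 1; omega
  have hsign : (-1 : ℂ) ^ p * (-1) ^ (M + j) = (-1) ^ (q + ν + 1) * (-1) ^ j := by
    rw [← pow_add, ← pow_add, neg_one_pow_eq_pow_mod_two,
      neg_one_pow_eq_pow_mod_two (n := q + ν + 1 + j)]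
    congr 1; omega
  have hfact : ((M + j - p).factorial * (M + j - q).factorial : ℂ)
      = j.factorial * (j + m).factorial := by
    rcases le_total p q with h | h
    · rw [show M + j - p = j + m by omega, show M + j - q = j by omega, mul_comm]
    · rw [show M + j - p = j by omega, show M + j - q = j + m by omega]
  have hcoef : ((p + q - 1).choose (M + j) * (M + j).descFactorial p * (M + j).descFactorial q
      : ℂ) / (p + q - 1).factorial
      = (M + j).factorial / (j.factorial * (j + m).factorial * (ν - j).factorial) := by
    have h := choose_mul_descFactorial_mul_descFactorial (n := p + q - 1) (k := M + j) (p := p)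
      (q := q) (by omega) (by omega) (by omega)
    rw [show p + q - 1 - (M + j) = ν - j by omega] at h
    rw [div_eq_div_iff (by simp [Nat.factorial_ne_zero]) (by simp [Nat.factorial_ne_zero]),
      ← hfact]
    exact_mod_cast h.trans (mul_comm _ _)
  calc _ = ((-1) ^ p * (-1) ^ (M + j)) / q * (1 - r ^ 2) * r ^ m * r ^ (2 * j)
        * (((p + q - 1).choose (M + j) * (M + j).descFactorial p * (M + j).descFactorial q : ℂ)
          / (p + q - 1).factorial) := by rw [hpow]; ring
    _ = _ := by rw [hsign, hcoef, hk]; ring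

theorem scatter_polar_general (p q : ℕ) (hp : 1 ≤ p) (hq : 1 ≤ q) (r θ : ℝ) :
    scatter p q ((r : ℂ) * Complex.exp (θ * Complex.I)) =
      Complex.exp (((q : ℂ) - (p : ℂ)) * θ * Complex.I) * (radialF p q r : ℂ) := by
  rw [scatter_ofReal_mul_exp, scatter_ofReal hp hq]

/-- Polar factorization: φ^{(p,q)}(r e^{iθ}) = e^{i(q-p)θ} f^{(p,q)}(r). -/
theorem scatter_polar (p q : ℕ) (hp : 1 ≤ p) (hq : 1 ≤ q) (r θ : ℝ) (hr : 0 ≤ r) :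
    scatter p q ((r : ℂ) * Complex.exp (θ * Complex.I)) =
      Complex.exp (((q : ℂ) - (p : ℂ)) * θ * Complex.I) * (radialF p q r : ℂ) :=
  scatter_polar_general p q hp hq r θ
end

section
/- If (p,q) and (p',q') are pairs of positive integers with q - p ≠ q' - p', then φ^{(p,q)} and φ^{(p',q')} are orthogonal in L²(D, dxdy/(1-x²-y²)), i.e., ∫_D φ^{(p,q)} conj(φ^{(p',q')}) (1-x²-y²)^{-1} dxdy = 0, and moreover this integral is absolutely convergent. -/
open MeasureTheory Complex

/-- The open unit disk in ℂ. -/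
def unitDisk : Set ℂ := {z : ℂ | ‖z‖ < 1}

/-- The measure dxdy/(1-x²-y²) on the unit disk. -/
noncomputable def diskMeasure : Measure ℂ :=
  (volume.restrict unitDisk).withDensity fun z => ENNReal.ofReal (1 - Complex.normSq z)⁻¹

/-!
Call `f` of rotation weight `k` if `f (a z) = a ^ k f z` for `|a| = 1`. Applying `∂_z` to a
function of weight `k` gives weight `k - 1`, applying `∂_z̄` gives `k + 1`, and functions of
`z z̄` have weight `0`; hence `φ^{(p,q)}` has weight `q - p` and `φ^{(p,q)} · conj φ^{(p',q')}`
has weight `k = (q - p) - (q' - p') ≠ 0`. The measure is rotation invariant, so rotating by `a`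
with `a ^ k = -1` shows that the integral equals its own negative. Absolute convergence holds
because each `φ` is `1 - |z|²` times a continuous function, and one such factor already cancels
the density.
-/

open scoped ContDiff ComplexConjugate

lemma fderiv_apply_eq_wdz_add_wdzbar (f : ℂ → ℂ) (z v : ℂ) :
    fderiv ℝ f z v = wdz f z * v + wdzbar f z * conj v := by
  obtain ⟨x, y, rfl⟩ : ∃ x y : ℝ, v = x + y * I := ⟨v.re, v.im, (re_add_im v).symm⟩
  have hlin : fderiv ℝ f z (x + y * I) = x * fderiv ℝ f z 1 + y * fderiv ℝ f z I := by
    have h := (fderiv ℝ f z).map_add (x • 1) (y • I)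
    rwa [map_smul, map_smul, real_smul, real_smul, real_smul, real_smul, mul_one] at h
  simp only [hlin, wdz, wdzbar, map_add, map_mul, conj_ofReal, conj_I]
  linear_combination (y * fderiv ℝ f z I) * I_mul_I

lemma fderiv_comp_const_mul (f : ℂ → ℂ) (a z v : ℂ) :
    fderiv ℝ (fun w => f (a * w)) z v = fderiv ℝ f (a * z) (a * v) := by
  rcases eq_or_ne a 0 with rfl | ha
  · simp
  · let e : ℂ ≃L[ℝ] ℂ := ContinuousLinearEquiv.smulLeft (Units.mk0 a ha)
    exact congrArg (· v) (e.comp_right_fderiv (f := f) (x := z))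

lemma wdz_const_mul (c : ℂ) (f : ℂ → ℂ) (z : ℂ) :
    wdz (fun w => c * f w) z = c * wdz f z := by
  rw [wdz, wdz, show (fun w => c * f w) = c • f from rfl, fderiv_const_smul_field]
  simp only [Pi.smul_apply, FunLike.coe_smul, smul_eq_mul]
  ring

lemma wdzbar_const_mul (c : ℂ) (f : ℂ → ℂ) (z : ℂ) :
    wdzbar (fun w => c * f w) z = c * wdzbar f z := by
  rw [wdzbar, wdzbar, show (fun w => c * f w) = c • f from rfl, fderiv_const_smul_field]
  simp only [Pi.smul_apply, FunLike.coe_smul, smul_eq_mul]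
  ring

lemma wdz_comp_const_mul (f : ℂ → ℂ) (a z : ℂ) :
    wdz (fun w => f (a * w)) z = a * wdz f (a * z) := by
  rw [wdz, fderiv_comp_const_mul, fderiv_comp_const_mul, fderiv_apply_eq_wdz_add_wdzbar,
    fderiv_apply_eq_wdz_add_wdzbar, map_mul, map_mul, map_one, conj_I]
  linear_combination (wdzbar f (a * z) * conj a - wdz f (a * z) * a) / 2 * I_mul_I

lemma wdzbar_comp_const_mul (f : ℂ → ℂ) (a z : ℂ) :
    wdzbar (fun w => f (a * w)) z = conj a * wdzbar f (a * z) := by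
  rw [wdzbar, fderiv_comp_const_mul, fderiv_comp_const_mul, fderiv_apply_eq_wdz_add_wdzbar,
    fderiv_apply_eq_wdz_add_wdzbar, map_mul, map_mul, map_one, conj_I]
  linear_combination (wdz f (a * z) * a - wdzbar f (a * z) * conj a) / 2 * I_mul_I

lemma contDiff_iterate_wdz {f : ℂ → ℂ} (hf : ContDiff ℝ ∞ f) (n : ℕ) :
    ContDiff ℝ ∞ (wdz^[n] f) := by
  induction n with
  | zero => exact hf
  | succ n ih =>
    have hD := (contDiff_infty_iff_fderiv.mp ih).2
    rw [Function.iterate_succ_apply']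
    unfold wdz
    fun_prop

lemma contDiff_iterate_wdzbar {f : ℂ → ℂ} (hf : ContDiff ℝ ∞ f) (n : ℕ) :
    ContDiff ℝ ∞ (wdzbar^[n] f) := by
  induction n with
  | zero => exact hf
  | succ n ih =>
    have hD := (contDiff_infty_iff_fderiv.mp ih).2
    rw [Function.iterate_succ_apply']
    unfold wdzbar
    fun_prop

def HasRotationWeight (k : ℤ) (f : ℂ → ℂ) : Prop :=
  ∀ (a : Circle) (z : ℂ), f (a * z) = (a : ℂ) ^ k * f z

namespace HasRotationWeight

variable {k l : ℤ} {f g : ℂ → ℂ}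

lemma comp_mul_conj (g : ℂ → ℂ) : HasRotationWeight 0 (fun z => g (z * conj z)) := by
  intro a z
  dsimp only
  rw [zpow_zero, one_mul, mul_conj, mul_conj, map_mul, Circle.normSq_coe, one_mul]

lemma mul (hf : HasRotationWeight k f) (hg : HasRotationWeight l g) :
    HasRotationWeight (k + l) (fun z => f z * g z) := by
  intro a z
  simp only [hf a, hg a, zpow_add₀ (Circle.coe_ne_zero a)]
  ring

lemma conj_comp (hf : HasRotationWeight k f) :
    HasRotationWeight (-k) (fun z => conj (f z)) := by
  intro a z
  simp only [hf a, map_mul, map_zpow₀, ← Circle.coe_inv_eq_conj, Circle.coe_inv, inv_zpow']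

lemma wdz (hf : HasRotationWeight k f) : HasRotationWeight (k - 1) (wdz f) := by
  intro a z
  have h := wdz_comp_const_mul f a z
  simp only [hf a, wdz_const_mul] at h
  rw [zpow_sub_one₀ (Circle.coe_ne_zero a)]
  field_simp
  linear_combination -h

lemma wdzbar (hf : HasRotationWeight k f) : HasRotationWeight (k + 1) (wdzbar f) := by
  intro a z
  have h := wdzbar_comp_const_mul f a z
  simp only [hf a, wdzbar_const_mul] at h
  have ha : (a : ℂ) * conj (a : ℂ) = 1 := by simp [mul_conj]
  rw [zpow_add_one₀ (Circle.coe_ne_zero a)]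
  linear_combination (-(a : ℂ)) * h - _root_.wdzbar f (a * z) * ha

lemma iterate_wdz (hf : HasRotationWeight k f) (n : ℕ) :
    HasRotationWeight (k - n) (_root_.wdz^[n] f) := by
  induction n with
  | zero => simpa using hf
  | succ n ih =>
    rw [Function.iterate_succ_apply', Nat.cast_succ, ← sub_sub]
    exact ih.wdz

lemma iterate_wdzbar (hf : HasRotationWeight k f) (n : ℕ) :
    HasRotationWeight (k + n) (_root_.wdzbar^[n] f) := by
  induction n with
  | zero => simpa using hf
  | succ n ih =>
    rw [Function.iterate_succ_apply', Nat.cast_succ, ← add_assoc]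
    exact ih.wdzbar

end HasRotationWeight

lemma unitDisk_eq_ball : unitDisk = Metric.ball 0 1 := by
  ext z
  simp [unitDisk]

theorem integral_eq_zero_of_hasRotationWeight {μ : Measure ℂ}
    (hμ : ∀ a : Circle, MeasurePreserving (fun z => (a : ℂ) * z) μ μ) {k : ℤ} (hk : k ≠ 0)
    {f : ℂ → ℂ} (hf : HasRotationWeight k f) : ∫ z, f z ∂μ = 0 := by
  set a := Circle.exp (Real.pi / k)
  have ha : (a : ℂ) ^ k ≠ 1 := by
    rw [← Circle.coe_zpow, ← Circle.exp_intCast_mul, mul_div_cancel₀ _ (by exact_mod_cast hk),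
      Ne, Circle.coe_eq_one]
    exact Circle.exp_pi_ne_one
  have hinv : ∫ z, f z ∂μ = (a : ℂ) ^ k * ∫ z, f z ∂μ := calc
    ∫ z, f z ∂μ = ∫ z, f (a * z) ∂μ :=
      ((hμ a).integral_comp (measurableEmbedding_mulLeft₀ (Circle.coe_ne_zero a)) f).symm
    _ = ∫ z, (a : ℂ) ^ k * f z ∂μ := by simp only [hf a]
    _ = (a : ℂ) ^ k * ∫ z, f z ∂μ := integral_const_mul _ _
  have h0 : (1 - (a : ℂ) ^ k) * ∫ z, f z ∂μ = 0 := by linear_combination hinv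
  exact (mul_eq_zero.mp h0).resolve_left (sub_ne_zero.mpr ha.symm)

theorem MeasureTheory.MeasurePreserving.withDensity_comp {α β : Type*} [MeasurableSpace α]
    [MeasurableSpace β] {μ : Measure α} {ν : Measure β} {T : α → β} {ρ : β → ENNReal}
    (hT : MeasurePreserving T μ ν) (hρ : Measurable ρ) :
    MeasurePreserving T (μ.withDensity (ρ ∘ T)) (ν.withDensity ρ) := by
  refine ⟨hT.measurable, Measure.ext fun s hs => ?_⟩
  rw [Measure.map_apply hT.measurable hs, withDensity_apply _ (hT.measurable hs),
    withDensity_apply _ hs]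
  exact hT.setLIntegral_comp_preimage hs hρ

lemma measurePreserving_circle_mul_diskMeasure (a : Circle) :
    MeasurePreserving (fun z => (a : ℂ) * z) diskMeasure diskMeasure := by
  have hvol : MeasurePreserving (fun z => (a : ℂ) * z) := by
    convert (rotation a).measurePreserving
    exact (rotation_apply a _).symm
  have hdisk : (fun z => (a : ℂ) * z) ⁻¹' unitDisk = unitDisk := by
    ext z
    simp [unitDisk, Circle.norm_coe]
  have hres := hvol.restrict_preimage (unitDisk_eq_ball ▸ measurableSet_ball)
  rw [hdisk] at hres
  have hρ : Measurable fun z : ℂ => ENNReal.ofReal (1 - normSq z)⁻¹ := by fun_prop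
  simpa only [diskMeasure, Function.comp_def, map_mul, Circle.normSq_coe, one_mul] using
    hres.withDensity_comp hρ

lemma integrable_diskMeasure_of_eq_mul {F G : ℂ → ℂ}
    (hG : ContinuousOn G (Metric.closedBall 0 1))
    (hF : ∀ z ∈ unitDisk, F z = (1 - normSq z) * G z) : Integrable F diskMeasure := by
  have hρ : Measurable fun z : ℂ => ENNReal.ofReal (1 - normSq z)⁻¹ := by fun_prop
  rw [diskMeasure, integrable_withDensity_iff_integrable_smul' hρ
    (ae_of_all _ fun _ => ENNReal.ofReal_lt_top)]
  have hGint : IntegrableOn G unitDisk :=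
    (hG.integrableOn_compact (isCompact_closedBall 0 1)).mono_set
      (unitDisk_eq_ball ▸ Metric.ball_subset_closedBall)
  refine hGint.congr_fun (fun z hz => ?_) (unitDisk_eq_ball ▸ measurableSet_ball)
  have hpos : 0 < 1 - normSq z := by
    have : ‖z‖ < 1 := hz
    rw [normSq_eq_norm_sq]
    nlinarith [norm_nonneg z]
  rw [hF z hz, ENNReal.toReal_ofReal (inv_nonneg.mpr hpos.le), real_smul, ← mul_assoc]
  push_cast
  rw [inv_mul_cancel₀ (by exact_mod_cast hpos.ne'), one_mul]

lemma scatter_hasRotationWeight (p q : ℕ) : HasRotationWeight (q - p) (scatter p q) := by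
  have hradial := (HasRotationWeight.comp_mul_conj fun u =>
    ((-1 : ℂ) ^ p / (q * Nat.factorial (p + q - 1))) * (1 - u))
  have hderiv := ((HasRotationWeight.comp_mul_conj fun u => (1 - u) ^ (p + q - 1)).iterate_wdzbar
    q).iterate_wdz p
  have h := hradial.mul hderiv
  rwa [zero_add, zero_add] at h

lemma exists_continuous_scatter_eq_mul (p q : ℕ) :
    ∃ G : ℂ → ℂ, Continuous G ∧ ∀ z, scatter p q z = (1 - normSq z) * G z := by
  have hconj : ContDiff ℝ ∞ (fun w : ℂ => conj w) := conjCLE.contDiff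
  have hsmooth : ContDiff ℝ ∞ (fun w : ℂ => (1 - w * conj w) ^ (p + q - 1)) := by fun_prop
  refine ⟨fun z => (-1 : ℂ) ^ p / (q * Nat.factorial (p + q - 1)) *
    wdz^[p] (wdzbar^[q] fun w => (1 - w * conj w) ^ (p + q - 1)) z,
    continuous_const.mul (contDiff_iterate_wdz (contDiff_iterate_wdzbar hsmooth q) p).continuous,
    fun z => ?_⟩
  rw [scatter, mul_conj]
  ring

theorem scatter_orthogonal_of_ne_diff_general (p q p' q' : ℕ)
    (h : (q : ℤ) - p ≠ (q' : ℤ) - p') :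
    Integrable (fun z => scatter p q z * (starRingEnd ℂ) (scatter p' q' z)) diskMeasure ∧
      ∫ z, scatter p q z * (starRingEnd ℂ) (scatter p' q' z) ∂diskMeasure = 0 := by
  obtain ⟨G, hG, hφ⟩ := exists_continuous_scatter_eq_mul p q
  obtain ⟨G', hG', hφ'⟩ := exists_continuous_scatter_eq_mul p' q'
  constructor
  · refine integrable_diskMeasure_of_eq_mul
      (G := fun z => (1 - normSq z) * G z * conj (G' z)) (by fun_prop) fun z _ => ?_
    rw [hφ, hφ', map_mul, map_sub, map_one, conj_ofReal]
    ring
  · refine integral_eq_zero_of_hasRotationWeight measurePreserving_circle_mul_diskMeasure ?_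
      ((scatter_hasRotationWeight p q).mul (scatter_hasRotationWeight p' q').conj_comp)
    omega

/-- If q - p ≠ q' - p', then φ^{(p,q)} ⟂ φ^{(p',q')} in L²(D, dxdy/(1-x²-y²)),
    the integral being absolutely convergent. -/
theorem scatter_orthogonal_of_ne_diff (p q p' q' : ℕ)
    (hp : 1 ≤ p) (hq : 1 ≤ q) (hp' : 1 ≤ p') (hq' : 1 ≤ q')
    (h : (q : ℤ) - p ≠ (q' : ℤ) - p') :
    Integrable (fun z => scatter p q z * (starRingEnd ℂ) (scatter p' q' z)) diskMeasure ∧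
      ∫ z, scatter p q z * (starRingEnd ℂ) (scatter p' q' z) ∂diskMeasure = 0 :=
  scatter_orthogonal_of_ne_diff_general p q p' q' h
end
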